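/- Let R ⊆ ℝ² be a closed rectangle with side lengths m and n, where m ≤ n, and let a be a point of R. Then there exists a polygonal path (a finite concatenation of straight segments) starting and ending at a such that every point of R is at distance at most 1 from some point of the path, and the total length of the path is at most 5n·max(m,2). -/

import Mathlib

open Real

noncomputable section

/-- Points of the Euclidean plane. -/
abbrev Pt := EuclideanSpace ℝ (Fin 2)

/-- The length of the polygonal path with consecutive vertices `v 0, v 1, …, v N`:
the sum of the lengths of its segments. -/
def polyLength {N : ℕ} (v : Fin (N + 1) → Pt) : ℝ :=
  ∑ i : Fin N, dist (v i.castSucc) (v i.succ)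

/-- The set of points of the polygonal path with consecutive vertices `v 0, …, v N`. -/
def polySet {N : ℕ} (v : Fin (N + 1) → Pt) : Set Pt :=
  ⋃ i : Fin N, segment ℝ (v i.castSucc) (v i.succ)

/-- `R` is a closed rectangle with side lengths `m` and `n` (in arbitrary position). -/
def IsRectangle (R : Set Pt) (m n : ℝ) : Prop :=
  ∃ x u w : Pt, ‖u‖ = 1 ∧ ‖w‖ = 1 ∧ (inner ℝ u w : ℝ) = 0 ∧
    R = {y | ∃ s t : ℝ, s ∈ Set.Icc 0 m ∧ t ∈ Set.Icc 0 n ∧ y = x + s • u + t • w}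

/-!
The path sweeps the rectangle in boustrophedon order: with `u` along the side of length `m`
and `w` along the side of length `n`, it runs through the full segments in direction `w` at
the abscissae `min (2i + 1) m` for `i = 0, …, ⌊m/2⌋`, joining consecutive ones along the
sides, and is closed up by two extra segments from and back to `a`. Every point of the
rectangle has abscissa within 1 of one of the columns. The path has `2⌊m/2⌋ + 3` segments,
each of length at most the diameter `m + n ≤ 2n`, and `(2⌊m/2⌋ + 3) · 2n ≤ 5n · max m 2`.
-/

open Set

section Sweep

variable {E : Type*} [NormedAddCommGroup E] [NormedSpace ℝ E]

theorem add_smul_mem_segment (p w : E) {n t : ℝ} (ht : t ∈ Icc 0 n) :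
    p + t • w ∈ segment ℝ p (p + n • w) := by
  have h := image_segment ℝ (AffineMap.lineMap p (p + w)) 0 n
  rw [segment_eq_Icc (ht.1.trans ht.2)] at h
  have hmem := h ▸ mem_image_of_mem (AffineMap.lineMap p (p + w)) ht
  simpa [AffineMap.lineMap_apply, add_comm] using hmem

theorem dist_add_smul_add_smul (x y : E) (s s' : ℝ) :
    dist (x + s • y) (x + s' • y) = |s - s'| * ‖y‖ := by
  rw [dist_add_left, dist_eq_norm, ← sub_smul, norm_smul, Real.norm_eq_abs]

def parallelogram (x u w : E) (m n : ℝ) : Set E :=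
  {y | ∃ s t : ℝ, s ∈ Icc 0 m ∧ t ∈ Icc 0 n ∧ y = x + s • u + t • w}

theorem dist_le_of_mem_parallelogram {x u w : E} {m n : ℝ} {p q : E}
    (hp : p ∈ parallelogram x u w m n) (hq : q ∈ parallelogram x u w m n) :
    dist p q ≤ m * ‖u‖ + n * ‖w‖ := by
  obtain ⟨s, t, hs, ht, rfl⟩ := hp
  obtain ⟨s', t', hs', ht', rfl⟩ := hq
  have hss' : |s - s'| ≤ m := abs_sub_le_of_nonneg_of_le hs.1 hs.2 hs'.1 hs'.2
  have htt' : |t - t'| ≤ n := abs_sub_le_of_nonneg_of_le ht.1 ht.2 ht'.1 ht'.2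
  calc dist (x + s • u + t • w) (x + s' • u + t' • w)
      ≤ dist (x + s • u + t • w) (x + s • u + t' • w)
          + dist (x + s • u + t' • w) (x + s' • u + t' • w) := dist_triangle _ _ _
    _ = |t - t'| * ‖w‖ + |s - s'| * ‖u‖ := by
        rw [dist_add_smul_add_smul, dist_add_right, dist_add_smul_add_smul]
    _ ≤ m * ‖u‖ + n * ‖w‖ := by nlinarith [norm_nonneg u, norm_nonneg w]

def sweepColumn (m : ℝ) (i : ℕ) : ℝ := min (2 * i + 1) m

theorem abs_sub_sweepColumn_floor_le_one {m s : ℝ} (hs : s ∈ Icc 0 m) :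
    |s - sweepColumn m ⌊s / 2⌋₊| ≤ 1 := by
  have hlo : (⌊s / 2⌋₊ : ℝ) ≤ s / 2 := Nat.floor_le (by linarith [hs.1])
  have hhi : s / 2 < ⌊s / 2⌋₊ + 1 := Nat.lt_floor_add_one _
  rw [sweepColumn, abs_sub_le_iff]
  constructor
  · cases min_choice (2 * (⌊s / 2⌋₊ : ℝ) + 1) m with
    | inl h => rw [h]; linarith
    | inr h => rw [h]; linarith [hs.2]
  · linarith [min_le_left (2 * (⌊s / 2⌋₊ : ℝ) + 1) m]

/-- The sweep visits the bottom and top ends of column `i` as vertices `2i` and `2i + 1`,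
bottom first for even `i` and top first for odd `i`. -/
def sweepVertex (x u w : E) (m n : ℝ) (j : ℕ) : E :=
  x + sweepColumn m (j / 2) • u + (if Even ((j + 1) / 2) then 0 else n) • w

theorem sweepVertex_mem_parallelogram (x u w : E) {m n : ℝ} (hm : 0 ≤ m) (hn : 0 ≤ n)
    (j : ℕ) : sweepVertex x u w m n j ∈ parallelogram x u w m n := by
  refine ⟨_, _, ⟨le_min (by positivity) hm, min_le_right _ _⟩, ?_, rfl⟩
  split_ifs
  exacts [⟨le_rfl, hn⟩, ⟨hn, le_rfl⟩]

theorem segment_sweepVertex (x u w : E) (m n : ℝ) (i : ℕ) :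
    segment ℝ (sweepVertex x u w m n (2 * i)) (sweepVertex x u w m n (2 * i + 1)) =
      segment ℝ (x + sweepColumn m i • u) (x + sweepColumn m i • u + n • w) := by
  have h₀ : 2 * i / 2 = i := by omega
  have h₁ : (2 * i + 1) / 2 = i := by omega
  have h₂ : (2 * i + 1 + 1) / 2 = i + 1 := by omega
  simp only [sweepVertex, h₀, h₁, h₂, Nat.even_add_one]
  split_ifs
  · simp
  · simp [segment_symm]

/-- The closed path `a → sweepVertex 0 → ⋯ → sweepVertex (2k - 1) → a`. -/
def sweepTour (a x u w : E) (m n : ℝ) (k : ℕ) (j : Fin (2 * k + 1 + 1)) : E :=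
  if j.val = 0 ∨ j.val = 2 * k + 1 then a else sweepVertex x u w m n (j.val - 1)

theorem sweepTour_mem {S : Set E} {a x u w : E} {m n : ℝ} {k : ℕ} (ha : a ∈ S)
    (hS : ∀ j, sweepVertex x u w m n j ∈ S) (j : Fin (2 * k + 1 + 1)) :
    sweepTour a x u w m n k j ∈ S := by
  unfold sweepTour
  split_ifs
  exacts [ha, hS _]

end Sweep

theorem segment_subset_polySet {N : ℕ} (v : Fin (N + 1) → Pt) (i : Fin N) :
    segment ℝ (v i.castSucc) (v i.succ) ⊆ polySet v :=
  subset_iUnion (fun i : Fin N => segment ℝ (v i.castSucc) (v i.succ)) i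

theorem polyLength_le_of_forall_mem {N : ℕ} {v : Fin (N + 1) → Pt} {S : Set Pt} {D : ℝ}
    (hS : ∀ p ∈ S, ∀ q ∈ S, dist p q ≤ D) (hv : ∀ j, v j ∈ S) : polyLength v ≤ N * D := by
  calc polyLength v ≤ ∑ _i : Fin N, D :=
        Finset.sum_le_sum fun i _ => hS _ (hv _) _ (hv _)
    _ = N * D := by simp

theorem segment_sweepVertex_subset_polySet (a x u w : Pt) (m n : ℝ) {k i : ℕ} (hi : i < k) :
    segment ℝ (sweepVertex x u w m n (2 * i)) (sweepVertex x u w m n (2 * i + 1)) ⊆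
      polySet (sweepTour a x u w m n k) := by
  have h := segment_subset_polySet (sweepTour a x u w m n k) ⟨2 * i + 1, by omega⟩
  simpa [sweepTour, hi.ne, show 2 * i + 1 ≠ 2 * k by omega] using h

theorem exists_mem_polySet_sweepTour_dist_le (a x u w : Pt) {m n : ℝ} {p : Pt}
    (hp : p ∈ parallelogram x u w m n) :
    ∃ y ∈ polySet (sweepTour a x u w m n (⌊m / 2⌋₊ + 1)), dist p y ≤ ‖u‖ := by
  obtain ⟨s, t, hs, ht, rfl⟩ := hp
  have hi : ⌊s / 2⌋₊ < ⌊m / 2⌋₊ + 1 :=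
    Nat.lt_succ_of_le (Nat.floor_le_floor (by linarith [hs.2]))
  refine ⟨x + sweepColumn m ⌊s / 2⌋₊ • u + t • w,
    segment_sweepVertex_subset_polySet a x u w m n hi ?_, ?_⟩
  · rw [segment_sweepVertex]
    exact add_smul_mem_segment _ _ ht
  · rw [dist_add_right, dist_add_smul_add_smul]
    exact mul_le_of_le_one_left (norm_nonneg u) (abs_sub_sweepColumn_floor_le_one hs)

theorem four_mul_floor_half_add_six_le (m : ℝ) : 4 * (⌊m / 2⌋₊ : ℝ) + 6 ≤ 5 * max m 2 := by
  rcases lt_or_ge m 2 with h | h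
  · have : ⌊m / 2⌋₊ = 0 := Nat.floor_eq_zero.2 (by linarith)
    simp only [this, Nat.cast_zero]
    linarith [le_max_right m 2]
  · have : (⌊m / 2⌋₊ : ℝ) ≤ m / 2 := Nat.floor_le (by linarith)
    linarith [le_max_left m 2]

theorem rectangleScan_general (R : Set Pt) (m n : ℝ) (hmn : m ≤ n)
    (hR : IsRectangle R m n) (a : Pt) (ha : a ∈ R) :
    ∃ (N : ℕ) (v : Fin (N + 1) → Pt), v 0 = a ∧ v (Fin.last N) = a ∧
      (∀ q ∈ R, ∃ y ∈ polySet v, dist q y ≤ 1) ∧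
      polyLength v ≤ 5 * n * max m 2 := by
  obtain ⟨x, u, w, hu, hw, -, rfl⟩ := hR
  have ⟨hm, hn⟩ : 0 ≤ m ∧ 0 ≤ n := by
    obtain ⟨s, t, hs, ht, -⟩ := ha
    exact ⟨hs.1.trans hs.2, ht.1.trans ht.2⟩
  set k := ⌊m / 2⌋₊ + 1
  refine ⟨2 * k + 1, sweepTour a x u w m n k, by simp [sweepTour], by simp [sweepTour],
    fun q hq => hu ▸ exists_mem_polySet_sweepTour_dist_le a x u w hq, ?_⟩
  have hdiam : ∀ p ∈ parallelogram x u w m n, ∀ q ∈ parallelogram x u w m n, dist p q ≤ 2 * n :=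
    fun p hp q hq => (dist_le_of_mem_parallelogram hp hq).trans (by rw [hu, hw]; linarith)
  calc polyLength (sweepTour a x u w m n k)
      ≤ ((2 * k + 1 : ℕ) : ℝ) * (2 * n) :=
        polyLength_le_of_forall_mem hdiam
          (sweepTour_mem ha (sweepVertex_mem_parallelogram x u w hm hn))
    _ = (4 * (⌊m / 2⌋₊ : ℝ) + 6) * n := by push_cast [k]; ring
    _ ≤ 5 * n * max m 2 := by nlinarith [four_mul_floor_half_add_six_le m]

/-- From any point `a` of a closed rectangle `R` with side lengths `m ≤ n` there is a
polygonal path starting and ending at `a`, of length at most `5 n · max m 2`, which passes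
within distance 1 of every point of `R`. -/
theorem rectangleScan (R : Set Pt) (m n : ℝ) (hm : 0 < m) (hmn : m ≤ n)
    (hR : IsRectangle R m n) (a : Pt) (ha : a ∈ R) :
    ∃ (N : ℕ) (v : Fin (N + 1) → Pt), v 0 = a ∧ v (Fin.last N) = a ∧
      (∀ q ∈ R, ∃ y ∈ polySet v, dist q y ≤ 1) ∧
      polyLength v ≤ 5 * n * max m 2 :=
  rectangleScan_general R m n hmn hR a ha
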